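/- Let (X_i)_{i∈ℤ} be a strictly stationary square-integrable real sequence with |Cov(X_0,X_j)| ≤ c(1+|j|)^{−a} for all j ∈ ℤ, for some c > 0 and a > 2. Let p_n = ⌊n^ζ⌋ for some ζ ∈ (1/3, 1) and k_n = ⌊n/p_n⌋. Then there exists a constant C > 0 such that for all n: Var(Σ_{i=1}^{k_n} Y_i^{(n)}) ≤ C k_n / p_n. -/

import Mathlib

open MeasureTheory ProbabilityTheory Filter Topology

noncomputable section

variable {Ω : Type*} [MeasurableSpace Ω]

/-- Covariance of two real-valued random variables. -/
def cov (P : Measure Ω) (f g : Ω → ℝ) : ℝ :=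
  (∫ ω, f ω * g ω ∂P) - (∫ ω, f ω ∂P) * (∫ ω, g ω ∂P)

/-- Strict stationarity of a real-valued process indexed by `ℤ`: for every shift `k`, the
joint law of the shifted process coincides with that of the original process. -/
def IsStrictlyStationary (P : Measure Ω) (X : ℤ → Ω → ℝ) : Prop :=
  ∀ k : ℤ, Measure.map (fun ω => fun i : ℤ => X (i + k) ω) P
    = Measure.map (fun ω => fun i : ℤ => X i ω) P

/-- The process `X` is α-mixing with coefficients `α`. -/
def IsAlphaMixingWith (P : Measure Ω) (X : ℤ → Ω → ℝ) (α : ℕ → ℝ) : Prop :=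
  ∀ q : ℕ, 1 ≤ q → ∀ t : ℤ, ∀ A B : Set Ω,
    MeasurableSet[⨆ i ∈ {i : ℤ | i ≤ t}, MeasurableSpace.comap (X i) (borel ℝ)] A →
    MeasurableSet[⨆ i ∈ {i : ℤ | t + (q : ℤ) ≤ i}, MeasurableSpace.comap (X i) (borel ℝ)] B →
    |(P (A ∩ B)).toReal - (P A).toReal * (P B).toReal| ≤ α q

/-- The process `X` is θ-weakly dependent with coefficients `θ`: for separated monotone blocks
of indices, any bounded measurable `f` of the past and any function `g` of the future that is
`L`-Lipschitz with respect to the ℓ¹-norm satisfy the covariance bound. -/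
def IsThetaWeaklyDependentWith (P : Measure Ω) (X : ℤ → Ω → ℝ) (θ : ℕ → ℝ) : Prop :=
  ∀ (u v q : ℕ), 1 ≤ u → 1 ≤ v → 1 ≤ q →
    ∀ (i : Fin u → ℤ) (j : Fin v → ℤ), Monotone i → Monotone j →
    (∀ a b, i a + (q : ℤ) ≤ j b) →
    ∀ (f : (Fin u → ℝ) → ℝ) (g : (Fin v → ℝ) → ℝ) (Mf L : ℝ),
      Measurable f → (∀ x, |f x| ≤ Mf) →
      (∀ x y, |g x - g y| ≤ L * ∑ a, |x a - y a|) →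
      |cov P (fun ω => f fun a => X (i a) ω) (fun ω => g fun b => X (j b) ω)|
        ≤ (v : ℝ) * L * Mf * θ q

/-- The common mean `m = E[X₀]`. -/
def meanX (P : Measure Ω) (X : ℤ → Ω → ℝ) : ℝ := ∫ ω, X 0 ω ∂P

/-- The long-run variance `σ² = Σ_{j ∈ ℤ} Cov(X₀, X_j)`. -/
def sigma2 (P : Measure Ω) (X : ℤ → Ω → ℝ) : ℝ := ∑' j : ℤ, cov P (X 0) (X j)

/-- Block mean `Y_i^{(n)}` over the Bernstein block `B_{i,n} = {(i-1)p+1, …, ip}`. -/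
def blockY (X : ℤ → Ω → ℝ) (p i : ℕ) (ω : Ω) : ℝ :=
  (∑ j ∈ Finset.Icc ((i - 1) * p + 1) (i * p), X (j : ℤ) ω) / p

/-- Normalized centred block sum `G_{i,n} = √p (Y_i^{(n)} − m)`. -/
def blockG (P : Measure Ω) (X : ℤ → Ω → ℝ) (p i : ℕ) (ω : Ω) : ℝ :=
  Real.sqrt p * (blockY X p i ω - meanX P X)

/-- Centred squared block sum `U_{i,n} = G_{i,n}² − E[G_{i,n}²]`. -/
def blockU (P : Measure Ω) (X : ℤ → Ω → ℝ) (p i : ℕ) (ω : Ω) : ℝ :=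
  blockG P X p i ω ^ 2 - ∫ ω', blockG P X p i ω' ^ 2 ∂P

/-- The statistic `𝒢_n = (m²√k)⁻¹ Σ_{i=1}^{k} U_{i,n}`. -/
def calG (P : Measure Ω) (X : ℤ → Ω → ℝ) (p k : ℕ) (ω : Ω) : ℝ :=
  (∑ i ∈ Finset.Icc 1 k, blockU P X p i ω) / (meanX P X ^ 2 * Real.sqrt k)

/-- The fourth joint cumulant `κ(X_a, X_b, X_c, X_d)`. -/
def cum4 (P : Measure Ω) (X : ℤ → Ω → ℝ) (a b c d : ℤ) : ℝ :=
  (∫ ω, (X a ω - meanX P X) * (X b ω - meanX P X) * (X c ω - meanX P X)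
      * (X d ω - meanX P X) ∂P)
    - cov P (X a) (X b) * cov P (X c) (X d)
    - cov P (X a) (X c) * cov P (X b) (X d)
    - cov P (X a) (X d) * cov P (X b) (X c)

/-- Condition (C): summability of the fourth cumulants
`Σ_{i,j,k=1}^∞ |κ(X₀, X_i, X_j, X_k)| < ∞`. -/
def CondC (P : Measure Ω) (X : ℤ → Ω → ℝ) : Prop :=
  Summable (fun v : ℕ × ℕ × ℕ =>
    |cum4 P X 0 ((v.1 : ℤ) + 1) ((v.2.1 : ℤ) + 1) ((v.2.2 : ℤ) + 1)|)

/-- Convergence in distribution: weak convergence of the laws of `Z n` under `P`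
to the limit measure `μLim`. -/
def TendstoInDistribution (P : Measure Ω) (Z : ℕ → Ω → ℝ) (μLim : Measure ℝ) : Prop :=
  ∀ F : BoundedContinuousFunction ℝ ℝ,
    Tendsto (fun n => ∫ ω, F (Z n ω) ∂P) atTop (𝓝 (∫ x, F x ∂μLim))

/-! The blocks tile `{1, …, k p}`, so `Σ_{i ≤ k} Y_i = p⁻¹ Σ_{j=1}^{k p} X_j`. By stationarity
`Cov(X_i, X_j) = Cov(X_0, X_{j-i})`, so every row of the covariance matrix of
`(X_1, …, X_{k p})` sums to at most `S = Σ_{h ∈ ℤ} c (1 + |h|)^{-a}`, finite since `a > 1`.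
Hence the variance is at most `p⁻² · k p · S = S k / p`. -/

lemma Finset.sum_Icc_sum_Ioc_blocks {M : Type*} [AddCommMonoid M] (f : ℕ → M) (p k : ℕ) :
    ∑ i ∈ Finset.Icc 1 k, ∑ j ∈ Finset.Ioc ((i - 1) * p) (i * p), f j
      = ∑ j ∈ Finset.Ioc 0 (k * p), f j := by
  induction k with
  | zero => simp
  | succ k ih =>
    rw [Finset.sum_Icc_succ_top (Nat.le_add_left 1 k), ih, Nat.add_sub_cancel,
      Finset.sum_Ioc_consecutive _ (Nat.zero_le _) (Nat.mul_le_mul_right p k.le_succ)]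

lemma sum_Icc_blockY {α : Type*} (X : ℤ → α → ℝ) (p k : ℕ) (ω : α) :
    ∑ i ∈ Finset.Icc 1 k, blockY X p i ω = (∑ j ∈ Finset.Ioc 0 (k * p), X j ω) / p := by
  simp only [blockY, ← Finset.sum_div, Finset.Icc_add_one_left_eq_Ioc,
    Finset.sum_Icc_sum_Ioc_blocks (fun j : ℕ => X j ω)]

lemma summable_one_add_abs_int_rpow_neg {a : ℝ} (ha : 1 < a) :
    Summable fun h : ℤ => (1 + |(h : ℝ)|) ^ (-a) := by
  refine (Real.summable_abs_int_rpow ha).of_norm_bounded_eventually ?_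
  filter_upwards [eventually_cofinite_ne 0] with h hh
  rw [Real.norm_of_nonneg (by positivity)]
  exact Real.rpow_le_rpow_of_nonpos (by positivity) (by linarith) (by linarith)

lemma cov_eq_covariance [IsProbabilityMeasure (P : Measure Ω)] {f g : Ω → ℝ}
    (hf : MemLp f 2 P) (hg : MemLp g 2 P) : cov P f g = cov[f, g; P] :=
  (covariance_eq_sub hf hg).symm

lemma cov_eq_of_identDistrib {Ω' : Type*} [MeasurableSpace Ω'] {P : Measure Ω}
    {P' : Measure Ω'} {f g : Ω → ℝ} {f' g' : Ω' → ℝ}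
    (h : IdentDistrib (fun ω => (f ω, g ω)) (fun ω => (f' ω, g' ω)) P P') :
    cov P f g = cov P' f' g' := by
  have hmul := (h.comp (measurable_fst.mul measurable_snd)).integral_eq
  have hfst := (h.comp measurable_fst).integral_eq
  have hsnd := (h.comp measurable_snd).integral_eq
  simp only [Function.comp_def, Pi.mul_apply] at hmul hfst hsnd
  simp only [cov, hmul, hfst, hsnd]

namespace IsStrictlyStationary

variable {P : Measure Ω} {X : ℤ → Ω → ℝ}

lemma identDistrib_shift (hX : ∀ i, Measurable (X i)) (hstat : IsStrictlyStationary P X)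
    (k : ℤ) : IdentDistrib (fun ω i => X (i + k) ω) (fun ω i => X i ω) P P where
  aemeasurable_fst := (measurable_pi_lambda _ fun i => hX (i + k)).aemeasurable
  aemeasurable_snd := (measurable_pi_lambda _ hX).aemeasurable
  map_eq := hstat k

lemma memLp (hX : ∀ i, Measurable (X i)) (hstat : IsStrictlyStationary P X)
    (hL2 : MemLp (X 0) 2 P) (t : ℤ) : MemLp (X t) 2 P := by
  have h := (hstat.identDistrib_shift hX t).comp (measurable_pi_apply 0)
  simp only [Function.comp_def, zero_add] at h
  exact h.memLp_iff.2 hL2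

lemma cov_eq (hX : ∀ i, Measurable (X i)) (hstat : IsStrictlyStationary P X) (s t : ℤ) :
    cov P (X s) (X t) = cov P (X 0) (X (t - s)) := by
  have h := (hstat.identDistrib_shift hX s).comp
    ((measurable_pi_apply 0).prodMk (measurable_pi_apply (t - s)))
  simp only [Function.comp_def, zero_add, sub_add_cancel] at h
  exact cov_eq_of_identDistrib h

end IsStrictlyStationary

lemma sum_comp_sub_le_tsum {g : ℤ → ℝ} (hg : Summable g) (hg0 : ∀ h, 0 ≤ g h)
    (J : Finset ℤ) (i : ℤ) : ∑ j ∈ J, g (j - i) ≤ ∑' h, g h :=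
  calc ∑ j ∈ J, g (j - i)
      ≤ ∑' j, g (j - i) :=
        Summable.sum_le_tsum J (fun _ _ => hg0 _) ((Equiv.subRight i).summable_iff.2 hg)
    _ = ∑' h, g h := (Equiv.subRight i).tsum_eq g

lemma IsStrictlyStationary.variance_sum_le [IsProbabilityMeasure (P : Measure Ω)]
    {X : ℤ → Ω → ℝ} (hX : ∀ i, Measurable (X i)) (hstat : IsStrictlyStationary P X)
    (hL2 : MemLp (X 0) 2 P) {g : ℤ → ℝ} (hg : Summable g)
    (hcov : ∀ j, |cov P (X 0) (X j)| ≤ g j) (J : Finset ℤ) :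
    variance (fun ω => ∑ j ∈ J, X j ω) P ≤ J.card * ∑' h, g h := by
  have hL2' := hstat.memLp hX hL2
  calc variance (fun ω => ∑ j ∈ J, X j ω) P
      = ∑ i ∈ J, ∑ j ∈ J, cov P (X 0) (X (j - i)) := by
        rw [variance_fun_sum' fun i _ => hL2' i]
        refine Finset.sum_congr rfl fun i _ => Finset.sum_congr rfl fun j _ => ?_
        rw [← cov_eq_covariance (hL2' i) (hL2' j), hstat.cov_eq hX]
    _ ≤ ∑ i ∈ J, ∑ j ∈ J, g (j - i) :=
        Finset.sum_le_sum fun _ _ => Finset.sum_le_sum fun _ _ =>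
          (le_abs_self _).trans (hcov _)
    _ ≤ ∑ _i ∈ J, ∑' h, g h :=
        Finset.sum_le_sum fun i _ =>
          sum_comp_sub_le_tsum hg (fun h => (abs_nonneg _).trans (hcov h)) J i
    _ = J.card * ∑' h, g h := by rw [Finset.sum_const, nsmul_eq_mul]

theorem stmt11_general
    (P : Measure Ω) [IsProbabilityMeasure P]
    (X : ℤ → Ω → ℝ) (hXmeas : ∀ i, Measurable (X i))
    (hstat : IsStrictlyStationary P X)
    (hL2 : MemLp (X 0) 2 P)
    (c a : ℝ) (hc : 0 < c) (ha : 2 < a)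
    (hcov : ∀ j : ℤ, |cov P (X 0) (X j)| ≤ c * (1 + |(j : ℝ)|) ^ (-a))
    (p : ℕ → ℕ) :
    ∃ C : ℝ, 0 < C ∧ ∀ n : ℕ, 1 ≤ n →
      variance (fun ω => ∑ i ∈ Finset.Icc 1 (n / p n), blockY X (p n) i ω) P
        ≤ C * ((n / p n : ℕ) : ℝ) / (p n : ℝ) := by
  set g : ℤ → ℝ := fun h => c * (1 + |(h : ℝ)|) ^ (-a)
  have hg : Summable g := (summable_one_add_abs_int_rpow_neg (by linarith)).mul_left c
  refine ⟨∑' h, g h, hg.tsum_pos (fun _ => by positivity) 0 (by simp [g, hc]), fun n _ => ?_⟩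
  set k := n / p n
  set J : Finset ℤ := (Finset.Ioc 0 (k * p n)).map Nat.castEmbedding
  have hblocks : (fun ω => ∑ i ∈ Finset.Icc 1 k, blockY X (p n) i ω)
      = fun ω => (∑ j ∈ J, X j ω) * (p n : ℝ)⁻¹ := by
    funext ω
    rw [sum_Icc_blockY, Finset.sum_map, div_eq_mul_inv]
    rfl
  have hcard : (J.card : ℝ) = k * p n := by simp [J]
  rw [hblocks, variance_mul_const]
  calc _ ≤ (J.card * ∑' h, g h) * ((p n : ℝ)⁻¹) ^ 2 :=
        mul_le_mul_of_nonneg_right (hstat.variance_sum_le hXmeas hL2 hg hcov J) (by positivity)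
    _ = (∑' h, g h) * k / p n := by
        rw [hcard]
        rcases eq_or_ne (p n : ℝ) 0 with hp | hp
        · simp [hp] -- both sides vanish, as `0⁻¹ = 0`
        · field_simp

/-- variance bound for the sum of the block means. -/
theorem stmt11
    (P : Measure Ω) [IsProbabilityMeasure P]
    (X : ℤ → Ω → ℝ) (hXmeas : ∀ i, Measurable (X i))
    (hstat : IsStrictlyStationary P X)
    (hL2 : MemLp (X 0) 2 P)
    (c a : ℝ) (hc : 0 < c) (ha : 2 < a)
    (hcov : ∀ j : ℤ, |cov P (X 0) (X j)| ≤ c * (1 + |(j : ℝ)|) ^ (-a))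
    (ζ : ℝ) (hζ : 1 / 3 < ζ ∧ ζ < 1)
    (p : ℕ → ℕ) (hpdef : ∀ n, p n = ⌊(n : ℝ) ^ ζ⌋₊) :
    ∃ C : ℝ, 0 < C ∧ ∀ n : ℕ, 1 ≤ n →
      variance (fun ω => ∑ i ∈ Finset.Icc 1 (n / p n), blockY X (p n) i ω) P
        ≤ C * ((n / p n : ℕ) : ℝ) / (p n : ℝ) :=
  stmt11_general P X hXmeas hstat hL2 c a hc ha hcov p
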